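/- Let u : ℝᴺ → ℝ be continuous, positive on a bounded open set Ω and zero outside Ω, with Lipschitz constant L and support in B_R, and let (uᵗ)_{t≥0} satisfy |uᵗ(x) − u(x)| ≤ LRt for all x. Set k = 2RL, M₁(t) = {0 < u ≤ kt} and M₂(t) = Ω ∩ {0 < uᵗ ≤ kt}. Then sup{ dist(x, ∂Ω) : x ∈ M₁(t) ∪ M₂(t) } → 0 as t → 0⁺. -/
import Mathlib


open Set Metric Filter Topology

lemma key_small_u (N : ℕ) (Ω : Set (EuclideanSpace ℝ (Fin N)))
    (hΩo : IsOpen Ω) (hΩb : Bornology.IsBounded Ω)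
    (u : EuclideanSpace ℝ (Fin N) → ℝ) (hu : Continuous u)
    (hupos : ∀ x ∈ Ω, 0 < u x) (ε : ℝ) (hε : 0 < ε) :
    ∃ δ > 0, ∀ x ∈ Ω, u x < δ → Metric.infDist x (frontier Ω) < ε := by
  set K := closure Ω ∩ {x | ε ≤ Metric.infDist x (frontier Ω)} with hK
  have hKcl : IsClosed K :=
    isClosed_closure.inter (isClosed_le continuous_const (continuous_infDist_pt _))
  have hKb : Bornology.IsBounded K := hΩb.closure.subset inter_subset_left
  have hKc : IsCompact K := Metric.isCompact_of_isClosed_isBounded hKcl hKb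
  have hKΩ : K ⊆ Ω := by
    intro x hx
    by_contra hxΩ
    have hxf : x ∈ frontier Ω := by
      rw [hΩo.frontier_eq]; exact ⟨hx.1, hxΩ⟩
    have h0 := Metric.infDist_zero_of_mem hxf
    have := hx.2
    simp only [mem_setOf_eq] at this
    linarith
  rcases K.eq_empty_or_nonempty with hKe | hKne
  · refine ⟨1, one_pos, fun x hx _ => ?_⟩
    by_contra h
    push_neg at h
    have : x ∈ K := ⟨subset_closure hx, h⟩
    simp [hKe] at this
  · obtain ⟨x₀, hx₀K, hmin⟩ := hKc.exists_isMinOn hKne hu.continuousOn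
    refine ⟨u x₀, hupos x₀ (hKΩ hx₀K), fun x hx hux => ?_⟩
    by_contra h
    push_neg at h
    have hxK : x ∈ K := ⟨subset_closure hx, h⟩
    exact absurd (hmin hxK) (not_le.mpr hux)

theorem stmt_6 (N : ℕ) (Ω : Set (EuclideanSpace ℝ (Fin N)))
    (hΩo : IsOpen Ω) (hΩb : Bornology.IsBounded Ω)
    (u : EuclideanSpace ℝ (Fin N) → ℝ) (hu : Continuous u)
    (hupos : ∀ x ∈ Ω, 0 < u x)
    (huzero : ∀ x ∉ Ω, u x = 0)
    (L R : ℝ) (hL : 0 < L) (hR : 0 < R)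
    (hlip : ∀ x y : EuclideanSpace ℝ (Fin N), |u x - u y| ≤ L * ‖x - y‖)
    (hsupp : ∀ x : EuclideanSpace ℝ (Fin N), x ∉ Metric.ball 0 R → u x = 0)
    (ut : ℝ → EuclideanSpace ℝ (Fin N) → ℝ)
    (hstab : ∀ t : ℝ, 0 ≤ t → ∀ x, |ut t x - u x| ≤ L * R * t)
    (k : ℝ) (hk : k = 2 * R * L) :
    Filter.Tendsto
      (fun t : ℝ => sSup ((fun x => Metric.infDist x (frontier Ω)) ''
        ({x | 0 < u x ∧ u x ≤ k * t} ∪ (Ω ∩ {x | 0 < ut t x ∧ ut t x ≤ k * t}))))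
      (nhdsWithin 0 (Set.Ioi 0)) (nhds 0) := by
  rw [Metric.tendsto_nhdsWithin_nhds]
  intro ε hε
  obtain ⟨δ, hδ, hkey⟩ := key_small_u N Ω hΩo hΩb u hu hupos (ε/2) (half_pos hε)
  have hk3 : 0 < k + L * R := by rw [hk]; nlinarith
  refine ⟨δ / (k + L * R), by positivity, fun {t} ht hdist => ?_⟩
  simp only [Real.dist_eq, sub_zero] at hdist ⊢
  have ht0 : 0 < t := ht
  rw [abs_of_pos ht0] at hdist
  have htδ : (k + L * R) * t < δ := by
    have := (lt_div_iff₀ hk3).mp hdist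
    linarith [this]
  have hmem : ∀ x ∈ ({x | 0 < u x ∧ u x ≤ k * t} ∪
      (Ω ∩ {x | 0 < ut t x ∧ ut t x ≤ k * t})),
      x ∈ Ω ∧ u x < δ := by
    intro x hx
    rcases hx with hx | hx
    · have hxΩ : x ∈ Ω := by
        by_contra h
        have := huzero x h
        linarith [hx.1]
      refine ⟨hxΩ, ?_⟩
      have : u x ≤ k * t := hx.2
      nlinarith [mul_pos hL (mul_pos hR ht0)]
    · refine ⟨hx.1, ?_⟩
      have h1 := hstab t ht0.le x
      have h2 := (abs_le.mp h1).1
      have : ut t x ≤ k * t := hx.2.2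
      nlinarith
  have hub : ∀ y ∈ (fun x => Metric.infDist x (frontier Ω)) ''
      ({x | 0 < u x ∧ u x ≤ k * t} ∪ (Ω ∩ {x | 0 < ut t x ∧ ut t x ≤ k * t})),
      y ≤ ε / 2 := by
    rintro y ⟨x, hx, rfl⟩
    obtain ⟨hxΩ, hux⟩ := hmem x hx
    exact (hkey x hxΩ hux).le
  have hle := Real.sSup_le hub (le_of_lt (half_pos hε))
  have hge : 0 ≤ sSup ((fun x => Metric.infDist x (frontier Ω)) ''
      ({x | 0 < u x ∧ u x ≤ k * t} ∪ (Ω ∩ {x | 0 < ut t x ∧ ut t x ≤ k * t}))) :=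
    Real.sSup_nonneg (by rintro y ⟨x, _, rfl⟩; exact Metric.infDist_nonneg)
  rw [abs_of_nonneg hge]
  linarith
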